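/- For all real α, β > 1/2, the integral defining the multivariate Beta function converges and is positive: 0 < B₂(α,β) < ∞, i.e. the function (x,y,z) ↦ ((1−x)(1−y) − z²)^(α−3/2) (xy − z²)^(β−3/2) is integrable on Ω and has positive integral, so the 2×2 multivariate Beta density is a well-defined probability density. -/

import Mathlib

open MeasureTheory Real Filter Finset

/-- The domain Ω: the set of (x,y,z) such that w = [[x,z],[z,y]] and I − w
are both positive definite. -/
def Omega : Set (ℝ × ℝ × ℝ) :=
  {p | 0 < p.1 ∧ 0 < 1 - p.1 ∧ 0 < p.1 * p.2.1 - p.2.2 ^ 2 ∧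
    0 < (1 - p.1) * (1 - p.2.1) - p.2.2 ^ 2}

/-- Unnormalized density of the 2×2 multivariate Beta distribution. -/
noncomputable def betaDens (α β : ℝ) (p : ℝ × ℝ × ℝ) : ℝ :=
  ((1 - p.1) * (1 - p.2.1) - p.2.2 ^ 2) ^ (α - 3/2) *
    (p.1 * p.2.1 - p.2.2 ^ 2) ^ (β - 3/2)

/-- The multivariate Beta function B₂(α,β). -/
noncomputable def B2 (α β : ℝ) : ℝ := ∫ p in Omega, betaDens α β p

/-- Expectation E_{α,β}[f(X,Y,Z)] under the 2×2 multivariate Beta distribution. -/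
noncomputable def Eab (α β : ℝ) (f : ℝ × ℝ × ℝ → ℝ) : ℝ :=
  (B2 α β)⁻¹ * ∫ p in Omega, f p * betaDens α β p

/-! For fixed `(y, z)` the two constraints on `x` cut out the interval
`z² / y < x < 1 - z² / (1 - y)`, on which both factors of the density are affine in `x`, so the
`x`-integral is a one-dimensional Beta integral. What remains is `(y (1 - y) - z²) ^ (α + β - 2)`
times powers of `y` and `1 - y`; its integral over `|z| < √(y (1 - y))` is again a Beta integral,
and the last integral over `0 < y < 1` is a third one. By Tonelli this gives the closed form
`B₂(α, β) = 2 ^ (2α + 2β - 3) B(β - 1/2, α - 1/2) B(α + β - 1, α + β - 1) B(β, α)`,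
which is finite and positive. -/

open Set ProbabilityTheory

lemma lintegral_Ioo_rpow_mul_one_sub_rpow {p q : ℝ} (hp : 0 < p) (hq : 0 < q) :
    ∫⁻ t in Ioo 0 1, ENNReal.ofReal (t ^ (p - 1) * (1 - t) ^ (q - 1)) =
      ENNReal.ofReal (beta p q) := by
  have h := lintegral_betaPDF_eq_one hp hq
  simp_rw [lintegral_betaPDF, mul_assoc, ENNReal.ofReal_mul (one_div_pos.2 (beta_pos hp hq)).le] at h
  rw [lintegral_const_mul _ (by fun_prop), ENNReal.ofReal_div_of_pos (beta_pos hp hq),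
    ENNReal.ofReal_one, one_div, ← ENNReal.div_eq_inv_mul] at h
  exact (ENNReal.div_eq_one_iff (by simpa using beta_pos hp hq) ENNReal.ofReal_ne_top).1 h

lemma lintegral_Ioo_sub_rpow_mul_sub_rpow {p q u v : ℝ} (hp : 0 < p) (hq : 0 < q) (huv : u < v) :
    ∫⁻ x in Ioo u v, ENNReal.ofReal ((x - u) ^ (p - 1) * (v - x) ^ (q - 1)) =
      ENNReal.ofReal ((v - u) ^ (p + q - 1) * beta p q) := by
  have hr : 0 < v - u := sub_pos.2 huv
  have himage : (fun t => (v - u) * t + u) '' Ioo 0 1 = Ioo u v := by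
    rw [image_affine_Ioo hr]; ring_nf
  rw [← himage, lintegral_image_eq_lintegral_abs_deriv_mul measurableSet_Ioo
    (fun t _ => ((hasDerivAt_id' t).const_mul (v - u) |>.add_const u).hasDerivWithinAt)
    (fun s _ t _ h => by simpa [hr.ne'] using h)]
  have hscale : ∀ t ∈ Ioo (0 : ℝ) 1,
      ENNReal.ofReal |(v - u) * 1| *
        ENNReal.ofReal (((v - u) * t + u - u) ^ (p - 1) * (v - ((v - u) * t + u)) ^ (q - 1)) =
      ENNReal.ofReal ((v - u) ^ (p + q - 1)) *
        ENNReal.ofReal (t ^ (p - 1) * (1 - t) ^ (q - 1)) := by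
    rintro t ⟨ht₀, ht₁⟩
    rw [← ENNReal.ofReal_mul (abs_nonneg _), ← ENNReal.ofReal_mul (by positivity)]
    congr 1
    rw [show (v - u) * t + u - u = (v - u) * t by ring,
      show v - ((v - u) * t + u) = (v - u) * (1 - t) by ring,
      mul_rpow hr.le ht₀.le, mul_rpow hr.le (by linarith), mul_one, abs_of_pos hr,
      show p + q - 1 = 1 + (p - 1) + (q - 1) by ring, rpow_add hr, rpow_add hr, rpow_one]
    ring
  rw [setLIntegral_congr_fun measurableSet_Ioo hscale, lintegral_const_mul _ (by fun_prop),
    lintegral_Ioo_rpow_mul_one_sub_rpow hp hq, ← ENNReal.ofReal_mul (by positivity)]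

lemma lintegral_Ioo_sq_sub_sq_rpow {s m : ℝ} (hs : 0 < s) (hm : 0 < m) :
    ∫⁻ z in Ioo (-m) m, ENNReal.ofReal ((m ^ 2 - z ^ 2) ^ (s - 1)) =
      ENNReal.ofReal ((2 * m) ^ (2 * s - 1) * beta s s) := by
  have hfactor : ∀ z ∈ Ioo (-m) m, ENNReal.ofReal ((m ^ 2 - z ^ 2) ^ (s - 1)) =
      ENNReal.ofReal ((z - -m) ^ (s - 1) * (m - z) ^ (s - 1)) := by
    rintro z ⟨hz₀, hz₁⟩
    rw [← mul_rpow (by linarith) (by linarith)]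
    ring_nf
  rw [setLIntegral_congr_fun measurableSet_Ioo hfactor,
    lintegral_Ioo_sub_rpow_mul_sub_rpow hs hs (by linarith)]
  ring_nf

def OmegaProj : Set (ℝ × ℝ) := {q | 0 < q.1 ∧ q.1 < 1 ∧ q.2 ^ 2 < q.1 * (1 - q.1)}

lemma measurableSet_Omega : MeasurableSet Omega := measurableSet_setOfPred.2 (by fun_prop)

lemma measurableSet_OmegaProj : MeasurableSet OmegaProj := measurableSet_setOfPred.2 (by fun_prop)

lemma mk_mem_Omega_iff {x y z : ℝ} :
    (x, y, z) ∈ Omega ↔ (y, z) ∈ OmegaProj ∧ x ∈ Ioo (z ^ 2 / y) (1 - z ^ 2 / (1 - y)) := by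
  simp only [Omega, OmegaProj, mem_ofPred_eq, Set.mem_Ioo]
  constructor
  · rintro ⟨hx₀, hx₁, hxy, hxy'⟩
    have hy₀ : 0 < y := by nlinarith [sq_nonneg z]
    have hy₁ : y < 1 := by nlinarith [sq_nonneg z]
    refine ⟨⟨hy₀, hy₁, by nlinarith⟩, (div_lt_iff₀ hy₀).2 (by linarith), ?_⟩
    have := (div_lt_iff₀ (sub_pos.2 hy₁)).2 (by linarith : z ^ 2 < (1 - x) * (1 - y))
    linarith
  · rintro ⟨⟨hy₀, hy₁, -⟩, hlo, hhi⟩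
    have h₁ := (div_lt_iff₀ hy₀).1 hlo
    have h₂ := (div_lt_iff₀ (sub_pos.2 hy₁)).1 (by linarith : z ^ 2 / (1 - y) < 1 - x)
    have : 0 ≤ z ^ 2 / y := by positivity
    have : 0 ≤ z ^ 2 / (1 - y) := div_nonneg (sq_nonneg z) (by linarith)
    exact ⟨by linarith, by linarith, by linarith, by linarith⟩

lemma mk_mem_OmegaProj_iff {y z : ℝ} :
    (y, z) ∈ OmegaProj ↔ y ∈ Ioo (0 : ℝ) 1 ∧ z ∈ Ioo (-√(y * (1 - y))) √(y * (1 - y)) := by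
  simp only [OmegaProj, mem_ofPred_eq, Set.mem_Ioo, and_assoc]
  refine and_congr_right fun hy₀ => and_congr_right fun hy₁ => ?_
  rw [← abs_lt, ← sqrt_sq_eq_abs, sqrt_lt_sqrt_iff (sq_nonneg z)]

lemma betaDens_mk_eq {α β x y z : ℝ} (hy₀ : 0 < y) (hy₁ : y < 1)
    (hx : x ∈ Ioo (z ^ 2 / y) (1 - z ^ 2 / (1 - y))) :
    betaDens α β (x, y, z) = (1 - y) ^ (α - 3/2) * y ^ (β - 3/2) *
      ((x - z ^ 2 / y) ^ (β - 3/2) * (1 - z ^ 2 / (1 - y) - x) ^ (α - 3/2)) := by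
  have hy₁' : 0 < 1 - y := sub_pos.2 hy₁
  have hhi : (1 - x) * (1 - y) - z ^ 2 = (1 - y) * (1 - z ^ 2 / (1 - y) - x) := by
    field_simp; ring
  have hlo : x * y - z ^ 2 = y * (x - z ^ 2 / y) := by field_simp
  rw [betaDens, hhi, hlo, mul_rpow hy₁'.le (by linarith [hx.2]), mul_rpow hy₀.le (by linarith [hx.1])]
  ring

noncomputable def betaDensMarginal (α β : ℝ) (q : ℝ × ℝ) : ℝ :=
  beta (β - 1/2) (α - 1/2) * (q.1 ^ (1/2 - α) * (1 - q.1) ^ (1/2 - β)) *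
    (q.1 * (1 - q.1) - q.2 ^ 2) ^ (α + β - 2)

@[fun_prop]
lemma measurable_betaDens (α β : ℝ) : Measurable (betaDens α β) := by
  unfold betaDens; fun_prop

@[fun_prop]
lemma measurable_betaDensMarginal (α β : ℝ) : Measurable (betaDensMarginal α β) := by
  unfold betaDensMarginal; fun_prop

lemma lintegral_indicator_betaDens_slice {α β : ℝ} (hα : 1/2 < α) (hβ : 1/2 < β) (q : ℝ × ℝ) :
    ∫⁻ x, Omega.indicator (fun p => ENNReal.ofReal (betaDens α β p)) (x, q) =
      OmegaProj.indicator (fun q => ENNReal.ofReal (betaDensMarginal α β q)) q := by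
  obtain ⟨y, z⟩ := q
  by_cases hq : (y, z) ∈ OmegaProj
  swap
  · simp [indicator, mk_mem_Omega_iff, hq]
  rw [indicator_of_mem hq]
  obtain ⟨hy₀, hy₁, hz⟩ : 0 < y ∧ y < 1 ∧ z ^ 2 < y * (1 - y) := id hq
  have hy₁' : 0 < 1 - y := sub_pos.2 hy₁
  have hwidth : 1 - z ^ 2 / (1 - y) - z ^ 2 / y = (y * (1 - y) - z ^ 2) / (y * (1 - y)) := by
    field_simp; ring
  have hslice : (fun x => Omega.indicator (fun p => ENNReal.ofReal (betaDens α β p)) (x, y, z)) =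
      (Ioo (z ^ 2 / y) (1 - z ^ 2 / (1 - y))).indicator fun x =>
        ENNReal.ofReal ((1 - y) ^ (α - 3/2) * y ^ (β - 3/2)) *
        ENNReal.ofReal ((x - z ^ 2 / y) ^ (β - 1/2 - 1) * (1 - z ^ 2 / (1 - y) - x) ^ (α - 1/2 - 1)) := by
    ext x
    by_cases hx : x ∈ Ioo (z ^ 2 / y) (1 - z ^ 2 / (1 - y))
    · rw [indicator_of_mem (mk_mem_Omega_iff.2 ⟨hq, hx⟩), indicator_of_mem hx,
        betaDens_mk_eq hy₀ hy₁ hx, ← ENNReal.ofReal_mul (by positivity)]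
      ring_nf
    · simp [indicator, mk_mem_Omega_iff, hx]
  have hlt : z ^ 2 / y < 1 - z ^ 2 / (1 - y) := by
    have : 0 < (y * (1 - y) - z ^ 2) / (y * (1 - y)) := div_pos (by linarith) (by positivity)
    linarith
  rw [hslice, lintegral_indicator measurableSet_Ioo, lintegral_const_mul _ (by fun_prop),
    lintegral_Ioo_sub_rpow_mul_sub_rpow (by linarith) (by linarith) hlt,
    ← ENNReal.ofReal_mul (by positivity)]
  congr 1
  rw [betaDensMarginal, hwidth, div_rpow (by linarith) (by positivity), mul_rpow hy₀.le hy₁'.le,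
    show (1/2 - α) = (β - 3/2) - (α + β - 2) by ring, rpow_sub hy₀ (β - 3/2),
    show (1/2 - β) = (α - 3/2) - (α + β - 2) by ring, rpow_sub hy₁' (α - 3/2),
    show β - 1/2 + (α - 1/2) - 1 = α + β - 2 by ring]
  ring

lemma lintegral_indicator_betaDensMarginal_slice {α β : ℝ} (hα : 1/2 < α) (hβ : 1/2 < β) (y : ℝ) :
    ∫⁻ z, OmegaProj.indicator (fun q => ENNReal.ofReal (betaDensMarginal α β q)) (y, z) =
      (Ioo (0 : ℝ) 1).indicator (fun y => ENNReal.ofReal (2 ^ (2 * α + 2 * β - 3) *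
        beta (β - 1/2) (α - 1/2) * beta (α + β - 1) (α + β - 1)) *
        ENNReal.ofReal (y ^ (β - 1) * (1 - y) ^ (α - 1))) y := by
  by_cases hy : y ∈ Ioo (0 : ℝ) 1
  swap
  · simp [indicator, mk_mem_OmegaProj_iff, hy]
  rw [indicator_of_mem hy]
  obtain ⟨hy₀, hy₁⟩ := hy
  have hB := beta_pos (by linarith : 0 < β - 1/2) (by linarith : 0 < α - 1/2)
  have hB' := beta_pos (by linarith : 0 < α + β - 1) (by linarith : 0 < α + β - 1)
  have hy₁' : 0 < 1 - y := sub_pos.2 hy₁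
  set m := √(y * (1 - y)) with hm
  have hm₀ : 0 < m := sqrt_pos.2 (by positivity)
  have hm2 : m ^ 2 = y * (1 - y) := sq_sqrt (by positivity)
  have hslice : (fun z => OmegaProj.indicator (fun q => ENNReal.ofReal (betaDensMarginal α β q)) (y, z)) =
      (Ioo (-m) m).indicator fun z =>
        ENNReal.ofReal (beta (β - 1/2) (α - 1/2) * (y ^ (1/2 - α) * (1 - y) ^ (1/2 - β))) *
        ENNReal.ofReal ((m ^ 2 - z ^ 2) ^ (α + β - 1 - 1)) := by
    ext z
    have hmem : (y, z) ∈ OmegaProj ↔ z ∈ Ioo (-m) m := by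
      rw [mk_mem_OmegaProj_iff, and_iff_right ⟨hy₀, hy₁⟩]
    by_cases hz : z ∈ Ioo (-m) m
    · rw [indicator_of_mem (hmem.2 hz), indicator_of_mem hz, betaDensMarginal,
        ← ENNReal.ofReal_mul (by positivity), hm2]
      ring_nf
    · rw [indicator_of_notMem (mt hmem.1 hz), indicator_of_notMem hz]
  rw [hslice, lintegral_indicator measurableSet_Ioo, lintegral_const_mul _ (by fun_prop),
    lintegral_Ioo_sq_sub_sq_rpow (by linarith) hm₀, ← ENNReal.ofReal_mul (by positivity),
    ← ENNReal.ofReal_mul (by positivity)]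
  congr 1
  rw [mul_rpow zero_le_two hm₀.le, hm, sqrt_eq_rpow, ← rpow_mul (by positivity),
    mul_rpow hy₀.le hy₁'.le, show 2 * (α + β - 1) - 1 = 2 * α + 2 * β - 3 by ring,
    show β - 1 = 1/2 - α + 1/2 * (2 * α + 2 * β - 3) by ring, rpow_add hy₀,
    show α - 1 = 1/2 - β + 1/2 * (2 * α + 2 * β - 3) by ring, rpow_add hy₁']
  ring

lemma betaDens_pos {α β : ℝ} {p : ℝ × ℝ × ℝ} (hp : p ∈ Omega) : 0 < betaDens α β p :=
  mul_pos (rpow_pos_of_pos hp.2.2.2 _) (rpow_pos_of_pos hp.2.2.1 _)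

lemma betaDens_nonneg_ae_restrict_Omega (α β : ℝ) :
    0 ≤ᵐ[volume.restrict Omega] betaDens α β :=
  (ae_restrict_iff' measurableSet_Omega).2 (ae_of_all _ fun _ hp => (betaDens_pos hp).le)

lemma setLIntegral_betaDens {α β : ℝ} (hα : 1/2 < α) (hβ : 1/2 < β) :
    ∫⁻ p in Omega, ENNReal.ofReal (betaDens α β p) = ENNReal.ofReal (2 ^ (2 * α + 2 * β - 3) *
      beta (β - 1/2) (α - 1/2) * beta (α + β - 1) (α + β - 1) * beta β α) := by
  rw [← lintegral_indicator measurableSet_Omega, Measure.volume_eq_prod,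
    lintegral_prod_symm _ ((Measurable.indicator (by fun_prop) measurableSet_Omega).aemeasurable),
    lintegral_congr (lintegral_indicator_betaDens_slice hα hβ), Measure.volume_eq_prod,
    lintegral_prod _ ((Measurable.indicator (by fun_prop) measurableSet_OmegaProj).aemeasurable),
    lintegral_congr (lintegral_indicator_betaDensMarginal_slice hα hβ),
    lintegral_indicator measurableSet_Ioo, lintegral_const_mul _ (by fun_prop),
    lintegral_Ioo_rpow_mul_one_sub_rpow (by linarith) (by linarith),
    ← ENNReal.ofReal_mul' (beta_pos (by linarith) (by linarith)).le]

lemma integrableOn_betaDens {α β : ℝ} (hα : 1/2 < α) (hβ : 1/2 < β) :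
    IntegrableOn (betaDens α β) Omega :=
  ⟨(measurable_betaDens α β).aestronglyMeasurable,
    (hasFiniteIntegral_iff_ofReal (betaDens_nonneg_ae_restrict_Omega α β)).2
      (setLIntegral_betaDens hα hβ ▸ ENNReal.ofReal_lt_top)⟩

theorem B2_eq {α β : ℝ} (hα : 1/2 < α) (hβ : 1/2 < β) :
    B2 α β = 2 ^ (2 * α + 2 * β - 3) *
      beta (β - 1/2) (α - 1/2) * beta (α + β - 1) (α + β - 1) * beta β α := by
  rw [B2, integral_eq_lintegral_of_nonneg_ae (betaDens_nonneg_ae_restrict_Omega α β)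
    (measurable_betaDens α β).aestronglyMeasurable, setLIntegral_betaDens hα hβ,
    ENNReal.toReal_ofReal]
  have := beta_pos (by linarith : 0 < β - 1/2) (by linarith : 0 < α - 1/2)
  have := beta_pos (by linarith : 0 < α + β - 1) (by linarith : 0 < α + β - 1)
  have := beta_pos (by linarith : 0 < β) (by linarith : 0 < α)
  positivity

/-- The defining integral of B₂(α,β) converges and is positive. -/
theorem B2_integrable_pos (α β : ℝ) (hα : 1/2 < α) (hβ : 1/2 < β) :
    IntegrableOn (betaDens α β) Omega volume ∧ 0 < B2 α β := by
  refine ⟨integrableOn_betaDens hα hβ, ?_⟩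
  rw [B2_eq hα hβ]
  exact mul_pos (mul_pos (mul_pos (by positivity) (beta_pos (by linarith) (by linarith)))
    (beta_pos (by linarith) (by linarith))) (beta_pos (by linarith) (by linarith))
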